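/- In Z-IL inference, the error at layer l at time l equals the increment of the value node at time l−1: ε^l_{i,l} = Δx^l_{i,l-1}, for 1 ≤ l ≤ l_max − 1, assuming ε^l_{i,0} = 0 for l > 0. -/

import Mathlib

/-!
Layer `L` is clamped to the input and the network starts in equilibrium, so all errors
vanish at time `0`. A layer moves only when its own error or the error of the layer below
it is nonzero, and an error at layer `m` can only become nonzero once layer `m` or `m + 1`
has moved. Hence a change travels down one layer per step: at time `t` every layer `m > t`
still holds its initial value. At time `l` the prediction `μ^l` therefore still equals its
initial value `μ^l_0 = x^l_0 = x^l_{l-1}`, which gives `ε^l_l = x^l_l - x^l_{l-1}`.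
-/

/-- PCN prediction `μ^l_{i,t} = ∑_j θ^{l+1}_{i,j} f(x^{l+1}_{j,t})`. -/
noncomputable def mu (n : ℕ → ℕ) (θ : ℕ → ℕ → ℕ → ℝ) (f : ℝ → ℝ)
    (x : ℕ → ℕ → ℝ) (l i : ℕ) : ℝ :=
  ∑ j ∈ Finset.range (n (l + 1)), θ (l + 1) i j * f (x (l + 1) j)

noncomputable def predError (n : ℕ → ℕ) (θ : ℕ → ℕ → ℕ → ℝ) (f : ℝ → ℝ)
    (x : ℕ → ℕ → ℝ) (l i : ℕ) : ℝ :=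
  x l i - mu n θ f x l i

section ZeroPropagation

variable {n : ℕ → ℕ} {θ : ℕ → ℕ → ℕ → ℝ} {f : ℝ → ℝ}

theorem mu_congr {x y : ℕ → ℕ → ℝ} {l : ℕ} (h : x (l + 1) = y (l + 1)) :
    mu n θ f x l = mu n θ f y l := by
  funext i
  simp only [mu, h]

variable {L : ℕ} {γ : ℝ} {X : ℕ → ℕ → ℕ → ℝ}

theorem predError_eq_zero_of_eq_init
    (hinit : ∀ l, 1 ≤ l → l ≤ L - 1 → ∀ i, X 0 l i = mu n θ f (X 0) l i) {t : ℕ}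
    (hfrozen : ∀ m, t < m → m ≤ L → X t m = X 0 m) {l : ℕ} (htl : t < l) (hl : 1 ≤ l)
    (hlL : l ≤ L - 1) (i : ℕ) :
    predError n θ f (X t) l i = 0 := by
  rw [predError, hfrozen l htl (by omega), mu_congr (hfrozen (l + 1) (by omega) (by omega)),
    ← hinit l hl hlL i, sub_self]

theorem eq_init_of_lt (hclamp : ∀ t, X t L = X 0 L)
    (hdyn : ∀ t, ∀ l, 0 < l → l < L → ∀ i,
      X (t + 1) l i = X t l i + γ *
        (-predError n θ f (X t) l i +
          deriv f (X t l i) *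
            ∑ k ∈ Finset.range (n (l - 1)), predError n θ f (X t) (l - 1) k * θ l k i))
    (hinit : ∀ l, 1 ≤ l → l ≤ L - 1 → ∀ i, X 0 l i = mu n θ f (X 0) l i) :
    ∀ t m, t < m → m ≤ L → X t m = X 0 m := by
  intro t
  induction t with
  | zero => exact fun _ _ _ ↦ rfl
  | succ t ih =>
    intro m htm hmL
    rcases hmL.eq_or_lt with rfl | hmL
    · exact hclamp _
    funext i
    have hm : predError n θ f (X t) m i = 0 :=
      predError_eq_zero_of_eq_init hinit ih (by omega) (by omega) (by omega) i
    have hbelow : ∀ k, predError n θ f (X t) (m - 1) k = 0 :=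
      predError_eq_zero_of_eq_init hinit ih (by omega) (by omega) (by omega)
    simp only [hdyn t m (by omega) hmL i, hm, hbelow, ih m (by omega) hmL.le, zero_mul,
      Finset.sum_const_zero, mul_zero, neg_zero, add_zero]

end ZeroPropagation

theorem zil_error_equals_increment_general
    (L : ℕ) (n : ℕ → ℕ) (θ : ℕ → ℕ → ℕ → ℝ) (f : ℝ → ℝ)
    (sIn : ℕ → ℝ) (γ : ℝ) (X : ℕ → ℕ → ℕ → ℝ)
    (hclampIn : ∀ t i, X t L i = sIn i)
    (hdyn : ∀ t, ∀ l, 0 < l → l < L → ∀ i,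
      X (t + 1) l i = X t l i + γ *
        (-(X t l i - mu n θ f (X t) l i) +
          deriv f (X t l i) *
            ∑ k ∈ Finset.range (n (l - 1)),
              (X t (l - 1) k - mu n θ f (X t) (l - 1) k) * θ l k i))
    (hinit : ∀ l, 1 ≤ l → l ≤ L - 1 → ∀ i, X 0 l i = mu n θ f (X 0) l i) :
    ∀ l, 1 ≤ l → l ≤ L - 1 → ∀ i,
      X l l i - mu n θ f (X l) l i = X l l i - X (l - 1) l i := by
  have hclamp : ∀ t, X t L = X 0 L := fun t ↦
    funext fun i ↦ (hclampIn t i).trans (hclampIn 0 i).symm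
  have hfrozen := eq_init_of_lt hclamp hdyn hinit
  intro l hl hlL i
  rw [mu_congr (hfrozen l (l + 1) (by omega) (by omega)), ← hinit l hl hlL i,
    hfrozen (l - 1) l (by omega) (by omega)]

/-- in Z-IL inference (with `ε^l_{i,0} = 0` for `l > 0`), the error at
layer `l` at time `l` equals the increment of the value node at time `l − 1`:
`ε^l_{i,l} = Δx^l_{i,l-1} = x^l_{i,l} − x^l_{i,l-1}`, for `1 ≤ l ≤ l_max − 1`. -/
theorem zil_error_equals_increment
    (L : ℕ) (n : ℕ → ℕ) (θ : ℕ → ℕ → ℕ → ℝ) (f : ℝ → ℝ) (hf : Differentiable ℝ f)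
    (sIn sOut : ℕ → ℝ) (γ : ℝ) (X : ℕ → ℕ → ℕ → ℝ)
    (hclampIn : ∀ t i, X t L i = sIn i)
    (hclampOut : ∀ t i, X t 0 i = sOut i)
    (hdyn : ∀ t, ∀ l, 0 < l → l < L → ∀ i,
      X (t + 1) l i = X t l i + γ *
        (-(X t l i - mu n θ f (X t) l i) +
          deriv f (X t l i) *
            ∑ k ∈ Finset.range (n (l - 1)),
              (X t (l - 1) k - mu n θ f (X t) (l - 1) k) * θ l k i))
    (hinit : ∀ l, 1 ≤ l → l ≤ L - 1 → ∀ i, X 0 l i = mu n θ f (X 0) l i) :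
    ∀ l, 1 ≤ l → l ≤ L - 1 → ∀ i,
      X l l i - mu n θ f (X l) l i = X l l i - X (l - 1) l i :=
  zil_error_equals_increment_general L n θ f sIn γ X hclampIn hdyn hinit
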